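/- Let T be a bounded selfadjoint operator on a complex Hilbert space whose spectrum does not meet the open interval (−Δ,Δ) for some Δ > 0, and let δ > 0. Then the operator norm of the continuous functional calculus of the function E ↦ 1 − tanh(E/δ)² applied to T satisfies ‖(1 − tanh(T/δ)²)‖ ≤ 4·e^{−2Δ/δ}. -/

import Mathlib

open MeasureTheory
open scoped ComplexOrder

noncomputable section

namespace Chiral

/-- The ℓ²-operator norm of a square complex matrix. -/
def opNorm {n : Type*} [Fintype n] [DecidableEq n] (T : Matrix n n ℂ) : ℝ :=
  ‖Matrix.toEuclideanCLM (𝕜 := ℂ) T‖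

/-- The trace norm `Tr √(T*T)` of a square complex matrix. -/
def traceNorm {n : Type*} [Fintype n] [DecidableEq n] (T : Matrix n n ℂ) : ℝ :=
  (((Matrix.posSemidef_conjTranspose_mul_self T).1.eigenvectorUnitary.1 *
      Matrix.diagonal (((↑) : ℝ → ℂ) ∘ Real.sqrt ∘ (Matrix.posSemidef_conjTranspose_mul_self T).1.eigenvalues) *
      (star (Matrix.posSemidef_conjTranspose_mul_self T).1.eigenvectorUnitary : Matrix n n ℂ)).trace).re

open Classical in
/-- Functional calculus of a Hermitian matrix: same eigenvectors, eigenvalue `E`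
replaced by `f E`.  (Junk value `0` if the matrix is not Hermitian.) -/
def matFun {n : Type*} [Fintype n] [DecidableEq n] (f : ℝ → ℂ) (H : Matrix n n ℂ) :
    Matrix n n ℂ :=
  if hH : H.IsHermitian then
    (hH.eigenvectorUnitary : Matrix n n ℂ) *
      Matrix.diagonal (fun i => f (hH.eigenvalues i)) *
      star (hH.eigenvectorUnitary : Matrix n n ℂ)
  else 0

/-- The matrix exponential. -/
def matExp {n : Type*} [Fintype n] [DecidableEq n] (M : Matrix n n ℂ) : Matrix n n ℂ :=
  NormedSpace.exp M

/-- `S = tanh (H/δ)` by functional calculus. -/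
def tanhOf {n : Type*} [Fintype n] [DecidableEq n] (δ : ℝ) (H : Matrix n n ℂ) :
    Matrix n n ℂ :=
  matFun (fun E => (Real.tanh (E / δ) : ℂ)) H

/-- Index set of the finite chain of length `L` with two internal degrees of freedom. -/
abbrev Site (L : ℕ) := Fin L × Fin 2

/-- The `2×2` block of a matrix on the chain corresponding to sites `x, y`. -/
def matBlock {L : ℕ} (T : Matrix (Site L) (Site L) ℂ) (x y : Fin L) :
    Matrix (Fin 2) (Fin 2) ℂ :=
  Matrix.of fun s s' => T (x, s) (y, s')

/-- A finite Hamiltonian is short range with parameters `d`, `K`. -/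
def FinShortRange {L : ℕ} (H : Matrix (Site L) (Site L) ℂ) (d K : ℝ) : Prop :=
  ∀ x : Fin L, ∑ y : Fin L,
    opNorm (matBlock H x y) * Real.exp (|((x : ℕ) : ℝ) - ((y : ℕ) : ℝ)| / d) ≤ K

/-- The chiral operator `C` on the finite chain: `+1` on the `A` component,
`-1` on the `B` component. -/
def chiralC (L : ℕ) : Matrix (Site L) (Site L) ℂ :=
  Matrix.diagonal fun p => if p.2 = 0 then 1 else -1

/-- The diagonal matrix `θ(X)` associated to a switch function `θ`. -/
def switchX {L : ℕ} (θ : Fin L → ℝ) : Matrix (Site L) (Site L) ℂ :=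
  Matrix.diagonal fun p => (θ p.1 : ℂ)

/-- The standard switch function: `1` on the left half (`x < L/2`), `0` on the right half. -/
def midSwitch (L : ℕ) : Fin L → ℝ := fun x => if ((x : ℕ) : ℝ) < (L : ℝ) / 2 then 1 else 0

/-- The edge index `Tr (C θ(X) (1 - S²))`. -/
def edgeIndex {L : ℕ} (θ : Fin L → ℝ) (S : Matrix (Site L) (Site L) ℂ) : ℂ :=
  Matrix.trace (chiralC L * switchX θ * (1 - S * S))

/-- The bulk index `½ Tr (C S [θ(X), S])`. -/
def bulkIndex {L : ℕ} (θ : Fin L → ℝ) (S : Matrix (Site L) (Site L) ℂ) : ℂ :=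
  (1 / 2 : ℂ) * Matrix.trace (chiralC L * S * (switchX θ * S - S * switchX θ))

/-- The bulk Hilbert space `ℓ²(ℤ; ℂ²)`. -/
abbrev BulkSpace := lp (fun _ : ℤ => EuclideanSpace ℂ (Fin 2)) 2

/-- Bounded operators on the bulk Hilbert space. -/
abbrev BulkOp := BulkSpace →L[ℂ] BulkSpace

/-- The canonical basis vector at site `x` with internal index `s`. -/
def bvec (x : ℤ) (s : Fin 2) : BulkSpace := lp.single 2 x (EuclideanSpace.single s 1)

/-- The `2×2` block `T_{x,y}` of a bulk operator. -/
def bulkBlock (T : BulkOp) (x y : ℤ) : Matrix (Fin 2) (Fin 2) ℂ :=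
  Matrix.of fun s s' => (inner ℂ (bvec x s) (T (bvec y s')) : ℂ)

/-- A bulk Hamiltonian is short range with parameters `d`, `K`:
`sup_x ∑_y ‖T_{x,y}‖ e^{|x-y|/d} ≤ K`. -/
def BulkShortRange (T : BulkOp) (d K : ℝ) : Prop :=
  ∀ x : ℤ,
    Summable (fun y : ℤ => opNorm (bulkBlock T x y) * Real.exp (|((x : ℝ)) - ((y : ℝ))| / d)) ∧
    ∑' y : ℤ, opNorm (bulkBlock T x y) * Real.exp (|((x : ℝ)) - ((y : ℝ))| / d) ≤ K

/-- The spectrum of `T` does not meet the open interval `(-Δ, Δ)`. -/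
def HasGap (T : BulkOp) (Δ : ℝ) : Prop :=
  ∀ r : ℝ, |r| < Δ → (r : ℂ) ∉ spectrum ℂ T

/-- The on-site chiral matrix `diag(1, -1)`. -/
def c2 : Matrix (Fin 2) (Fin 2) ℂ := Matrix.diagonal fun s => if s = 0 then 1 else -1

/-- A bulk operator is chiral: it anticommutes with the bulk chiral operator
(expressed blockwise, which is equivalent). -/
def ChiralBulk (T : BulkOp) : Prop :=
  ∀ x y : ℤ, c2 * bulkBlock T x y + bulkBlock T x y * c2 = 0

/-- The restriction `ι* T ι` of a bulk operator to the finite open chain of length `L`. -/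
def restrict (L : ℕ) (T : BulkOp) : Matrix (Site L) (Site L) ℂ :=
  Matrix.of fun p q => bulkBlock T ((p.1 : ℕ) : ℤ) ((q.1 : ℕ) : ℤ) p.2 q.2

end Chiral

theorem le_abs_of_mem_spectrum_real {A : Type*} [Ring A] [Algebra ℂ A] {a : A} {Δ : ℝ}
    (hgap : ∀ r : ℝ, |r| < Δ → (r : ℂ) ∉ spectrum ℂ a) {x : ℝ} (hx : x ∈ spectrum ℝ a) :
    Δ ≤ |x| :=
  not_lt.mp fun h => hgap x h (spectrum.algebraMap_mem ℂ hx)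

namespace Real

theorem one_sub_tanh_sq (u : ℝ) : 1 - tanh u ^ 2 = (cosh u ^ 2)⁻¹ := by
  have := (cosh_pos u).ne'
  rw [tanh_eq_sinh_div_cosh]
  field_simp
  linarith [cosh_sq u]

theorem exp_abs_le_two_mul_cosh (u : ℝ) : exp |u| ≤ 2 * cosh u := by
  rw [← cosh_abs, cosh_eq]
  linarith [exp_pos (-|u|)]

theorem one_sub_tanh_sq_le (u : ℝ) : 1 - tanh u ^ 2 ≤ 4 * exp (-2 * |u|) :=
  calc 1 - tanh u ^ 2 = 4 * ((2 * cosh u) ^ 2)⁻¹ := by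
        rw [one_sub_tanh_sq, mul_pow, mul_inv, ← mul_assoc]; norm_num
    _ ≤ 4 * (exp |u| ^ 2)⁻¹ := by
        gcongr
        exact exp_abs_le_two_mul_cosh u
    _ = 4 * exp (-2 * |u|) := by
        rw [← exp_nat_mul, ← exp_neg]; ring_nf

theorem one_sub_tanh_div_sq_le_of_le_abs {Δ δ x : ℝ} (hδ : 0 < δ) (hx : Δ ≤ |x|) :
    1 - tanh (x / δ) ^ 2 ≤ 4 * exp (-2 * Δ / δ) :=
  calc 1 - tanh (x / δ) ^ 2 ≤ 4 * exp (-2 * |x / δ|) := one_sub_tanh_sq_le _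
    _ ≤ 4 * exp (-2 * Δ / δ) := by
        rw [abs_div, abs_of_pos hδ, neg_mul, neg_mul, neg_div, mul_div_assoc]
        gcongr

end Real

namespace Chiral

theorem stmt19_general {E : Type*} [NormedAddCommGroup E] [InnerProductSpace ℂ E] [CompleteSpace E]
    (T : E →L[ℂ] E)
    (Δ δ : ℝ) (hδ : 0 < δ)
    (hgap : ∀ r : ℝ, |r| < Δ → (r : ℂ) ∉ spectrum ℂ T) :
    ‖cfc (fun x : ℝ => 1 - Real.tanh (x / δ) ^ 2) T‖ ≤ 4 * Real.exp (-2 * Δ / δ) := by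
  refine norm_cfc_le (by positivity) fun x hx => ?_
  rw [Real.norm_of_nonneg (sub_nonneg.mpr (Real.tanh_sq_lt_one _).le)]
  exact Real.one_sub_tanh_div_sq_le_of_le_abs hδ (le_abs_of_mem_spectrum_real hgap hx)

theorem stmt19 {E : Type*} [NormedAddCommGroup E] [InnerProductSpace ℂ E] [CompleteSpace E]
    (T : E →L[ℂ] E) (hT : IsSelfAdjoint T)
    (Δ δ : ℝ) (hΔ : 0 < Δ) (hδ : 0 < δ)
    (hgap : ∀ r : ℝ, |r| < Δ → (r : ℂ) ∉ spectrum ℂ T) :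
    ‖cfc (fun x : ℝ => 1 - Real.tanh (x / δ) ^ 2) T‖ ≤ 4 * Real.exp (-2 * Δ / δ) :=
  stmt19_general T Δ δ hδ hgap

end Chiral

end
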